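/- Let $\tilde{M}$ be the universal cover of a nonflat compact orientable nonpositively curved surface (hence a visibility manifold), and let $v \in T^1\tilde{M}$ be such that the weak stable manifold $\tilde{W}^{ws}(v)$ contains no rank 2 vectors. Then for every $w \in T^1\tilde{M}$ with $w_- \neq v_+$, there exists a unique $s \in \mathbb{R}$ such that $\tilde{h}_s(w) \in \tilde{W}^{ws}(v)$, where $\tilde{h}_s$ is any horocyclic flow on $T^1\tilde{M}$. -/
import Mathlib


open Set

/-- On the universal cover of a nonflat compact orientable nonpositively
curved surface (a visibility manifold), if the weak stable manifold
`W̃^{ws}(v) = {u : u₊ = v₊}` contains no rank 2 vectors, then every `w` with `w₋ ≠ v₊`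
meets `W̃^{ws}(v)` under the horocyclic flow at a unique time: there is a unique `s ∈ ℝ`
with `(h_s(w))₊ = v₊`. The geometry enters through: `hconn` (the visibility axiom: any
boundary point distinct from `w₋` is the forward endpoint of some vector of the unstable
horocycle `H(w)`), `hflat` (the flat strip theorem: two distinct vectors of a horocycle
with the same forward endpoint bound a flat strip, hence have rank 2), `horbit` and
`hinj` (the orbits of the horocyclic flow are the unstable horocycles, injectively
parametrized), and `hminus` (all vectors of a horocycle have the same backward endpoint). -/
theorem unique_intersection_weak_stable
    {UT B : Type*}
    (vminus vplus : UT → B)          -- backward / forward endpoints at infinity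
    (H : UT → Set UT)                -- the unstable horocycle through a vector
    (h : ℝ → UT → UT)                -- a horocyclic flow
    (horbit : ∀ w, Set.range (fun s => h s w) = H w)
    (hinj : ∀ w : UT, Function.Injective fun s => h s w)
    (hminus : ∀ (s : ℝ) (w : UT), vminus (h s w) = vminus w)
    -- visibility axiom
    (hconn : ∀ (w : UT) (η : B), η ≠ vminus w → ∃ u ∈ H w, vplus u = η)
    (R2 : Set UT)                    -- the vectors of rank 2
    -- flat strip theorem
    (hflat : ∀ w u u', u ∈ H w → u' ∈ H w → u ≠ u' → vplus u = vplus u' → u ∈ R2)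
    (v : UT)
    (hv : ∀ u, vplus u = vplus v → u ∉ R2)   -- W̃^{ws}(v) has no rank 2 vectors
    (w : UT) (hw : vminus w ≠ vplus v) :
    ∃! s : ℝ, vplus (h s w) = vplus v := by
  obtain ⟨u, hu, huv⟩ := hconn w (vplus v) (Ne.symm hw)
  rw [← horbit w] at hu
  obtain ⟨s, rfl⟩ := hu
  refine ⟨s, huv, fun s' hs' => ?_⟩
  by_contra hne
  have hmem : h s' w ∈ H w := (horbit w) ▸ mem_range_self s'
  have hmem2 : h s w ∈ H w := (horbit w) ▸ mem_range_self s
  exact hv _ hs' (hflat w (h s' w) (h s w) hmem hmem2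
    (fun he => hne (hinj w he)) (hs'.trans huv.symm))
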